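/- In the braid group B_n, the band generators a_{ts} and a_{rq} commute whenever (t-r)(t-q)(s-r)(s-q) > 0, i.e., whenever the intervals [s,t] and [q,r] are either disjoint or nested. -/

import Mathlib

/-!
The band generator `a_{ts}` is the conjugate `P a_s P⁻¹` by `P = a_{t-1} ⋯ a_{s+1}`, so it lies
in the subgroup generated by `a_s, …, a_{t-1}`, and it suffices that each letter `a_j`,
`q ≤ j < r`, of `a_{rq}` commutes with `a_{ts}`. The sign condition says that `[q, r]` and
`[s, t]` are nested or disjoint. If they are disjoint, `a_j` is far from every letter of `a_{ts}`.
If `[q, r]` lies strictly inside `[s, t]`, the braid relations give `P a_{j+1} P⁻¹ = a_j`, so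
`a_j` and `a_{ts}` are the conjugates by `P` of the commuting generators `a_{j+1}` and `a_s`.
-/

/-- `descProd a s k` is the product `a (s+k) * a (s+k-1) * ... * a (s+1)`. -/
def descProd {G : Type*} [Group G] (a : ℕ → G) (s : ℕ) : ℕ → G
  | 0 => 1
  | k + 1 => a (s + k + 1) * descProd a s k

/-- The Birman-Ko-Lee band generator
`a_{ts} = (a_{t-1} a_{t-2} ⋯ a_{s+1}) a_s (a_{s+1}⁻¹ ⋯ a_{t-2}⁻¹ a_{t-1}⁻¹)`. -/
def band {G : Type*} [Group G] (a : ℕ → G) (t s : ℕ) : G :=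
  descProd a s (t - s - 1) * a s * (descProd a s (t - s - 1))⁻¹

lemma nested_or_disjoint_of_mul_pos {t s r q : ℕ}
    (h : 0 < ((t : ℤ) - r) * ((t : ℤ) - q) * ((s : ℤ) - r) * ((s : ℤ) - q)) :
    (s < q ∧ r < t) ∨ (r < s ∨ t < q) ∨ (q < s ∧ t < r) := by
  by_contra! hc
  obtain ⟨hsq, ⟨hsr, hqt⟩, hqs⟩ := hc
  zify at *
  rcases lt_trichotomy (s : ℤ) q with hlt | heq | hgt
  · nlinarith [mul_nonneg (mul_nonneg (mul_nonneg (sub_nonneg.2 (hsq hlt)) (sub_nonneg.2 hqt))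
      (sub_nonneg.2 hsr)) (sub_nonneg.2 hlt.le)]
  · simp [heq] at h
  · nlinarith [mul_nonneg (mul_nonneg (mul_nonneg (sub_nonneg.2 (hqs hgt)) (sub_nonneg.2 hqt))
      (sub_nonneg.2 hsr)) (sub_nonneg.2 hgt.le)]

section

variable {G : Type*} [Group G]

lemma Commute.of_mem_closure {S : Set G} {x y : G} (hy : y ∈ Subgroup.closure S)
    (h : ∀ g ∈ S, Commute x g) : Commute x y := by
  have hle : Subgroup.closure S ≤ Subgroup.centralizer {x} :=
    (Subgroup.closure_le _).2 fun g hg =>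
      Subgroup.mem_centralizer_singleton_iff.2 (h g hg).eq.symm
  exact (Subgroup.mem_centralizer_singleton_iff.1 (hle hy)).symm

lemma descProd_mem_closure (a : ℕ → G) (s k : ℕ) :
    descProd a s k ∈ Subgroup.closure (a '' Set.Ioc s (s + k)) := by
  induction k with
  | zero => exact one_mem _
  | succ k ih =>
    refine mul_mem (Subgroup.subset_closure ⟨s + k + 1, by simp, rfl⟩) ?_
    exact Subgroup.closure_mono (Set.image_mono (Set.Ioc_subset_Ioc_right (by omega))) ih

lemma band_mem_closure (a : ℕ → G) {t s : ℕ} (hst : s < t) :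
    band a t s ∈ Subgroup.closure (a '' Set.Ico s t) := by
  have hP := Subgroup.closure_mono (Set.image_mono (fun i (hi : i ∈ Set.Ioc s (s + (t - s - 1)))
    => show i ∈ Set.Ico s t by simp at hi ⊢; omega)) (descProd_mem_closure a s (t - s - 1))
  exact mul_mem (mul_mem hP (Subgroup.subset_closure ⟨s, by simp [hst], rfl⟩)) (inv_mem hP)

lemma descProd_add (a : ℕ → G) (s k m : ℕ) :
    descProd a s (k + m) = descProd a (s + k) m * descProd a s k := by
  induction m with
  | zero => simp [descProd]
  | succ m ih => rw [← add_assoc, descProd, descProd, ih, add_assoc s k m, mul_assoc]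

namespace BraidRelations

variable {n : ℕ} {a : ℕ → G}
    (hbraid : ∀ i, 1 ≤ i → i + 1 ≤ n - 1 →
      a i * a (i + 1) * a i = a (i + 1) * a i * a (i + 1))
    (hcomm : ∀ i j, 1 ≤ i → i + 2 ≤ j → j ≤ n - 1 → a i * a j = a j * a i)
include hcomm

include hbraid in
lemma descProd_mul_gen_mul_inv (s c m : ℕ) (h : s + c + 2 + m ≤ n - 1) :
    descProd a s (c + 2 + m) * a (s + c + 2) * (descProd a s (c + 2 + m))⁻¹ =
      a (s + c + 1) := by
  have hA : Commute (descProd a (s + c + 2) m) (a (s + c + 1)) := by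
    refine (Commute.of_mem_closure (descProd_mem_closure a _ m)
      (Set.forall_mem_image.2 fun i hi => ?_)).symm
    simp only [Set.mem_Ioc] at hi
    exact hcomm _ _ (by omega) (by omega) (by omega)
  have hB : Commute (descProd a s c) (a (s + c + 2)) := by
    refine (Commute.of_mem_closure (descProd_mem_closure a s c)
      (Set.forall_mem_image.2 fun i hi => ?_)).symm
    simp only [Set.mem_Ioc] at hi
    exact (hcomm _ _ (by omega) (by omega) (by omega)).symm
  have hmid : descProd a (s + c) 2 = a (s + c + 2) * a (s + c + 1) := by
    simp [descProd, add_assoc]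
  rw [mul_inv_eq_iff_eq_mul, descProd_add, descProd_add, hmid]
  set A := descProd a (s + c + 2) m
  set B := descProd a s c
  calc A * (a (s + c + 2) * a (s + c + 1) * B) * a (s + c + 2)
      = A * (a (s + c + 2) * a (s + c + 1) * a (s + c + 2)) * B := by
        simp only [mul_assoc, hB.eq]
    _ = A * a (s + c + 1) * (a (s + c + 2) * a (s + c + 1) * B) := by
        rw [← hbraid _ (by omega) (by omega)]; simp only [mul_assoc]
    _ = a (s + c + 1) * (A * (a (s + c + 2) * a (s + c + 1) * B)) := by
        rw [hA.eq, mul_assoc]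

lemma commute_gen_band_of_disjoint {j t s : ℕ} (hs : 1 ≤ s) (hst : s < t) (hj : 1 ≤ j)
    (hjn : j ≤ n - 1) (ht : t ≤ n) (hfar : j + 2 ≤ s ∨ t + 1 ≤ j) :
    Commute (a j) (band a t s) := by
  refine Commute.of_mem_closure (band_mem_closure a hst) (Set.forall_mem_image.2 fun i hi => ?_)
  simp only [Set.mem_Ico] at hi
  rcases hfar with hfar | hfar
  · exact hcomm j i hj (by omega) (by omega)
  · exact (hcomm i j (by omega) (by omega) hjn).symm

include hbraid in
lemma commute_gen_band_of_nested {j t s : ℕ} (hs : 1 ≤ s) (hsj : s < j) (hjt : j + 2 ≤ t)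
    (ht : t ≤ n) : Commute (a j) (band a t s) := by
  have hconj := descProd_mul_gen_mul_inv hbraid hcomm s (j - s - 1) (t - j - 2) (by omega)
  rw [show j - s - 1 + 2 + (t - j - 2) = t - s - 1 by omega,
    show s + (j - s - 1) + 2 = j + 1 by omega, show s + (j - s - 1) + 1 = j by omega] at hconj
  rw [← hconj]
  exact Commute.conj (hcomm s (j + 1) hs (by omega) (by omega)).symm _

include hbraid in
lemma commute_band_band_of_nested_or_disjoint {t s r q : ℕ} (ht : t ≤ n) (hst : s < t)
    (hs : 1 ≤ s) (hr : r ≤ n) (hqr : q < r) (hq : 1 ≤ q)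
    (hcase : (s < q ∧ r < t) ∨ r < s ∨ t < q) :
    Commute (band a t s) (band a r q) := by
  refine Commute.of_mem_closure (band_mem_closure a hqr)
    (Set.forall_mem_image.2 fun j hj => Commute.symm ?_)
  simp only [Set.mem_Ico] at hj
  rcases hcase with ⟨hsq, hrt⟩ | hrs | htq
  · exact commute_gen_band_of_nested hbraid hcomm hs (by omega) (by omega) ht
  · exact commute_gen_band_of_disjoint hcomm hs hst (by omega) (by omega) ht (by omega)
  · exact commute_gen_band_of_disjoint hcomm hs hst (by omega) (by omega) ht (by omega)

end BraidRelations

end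

open BraidRelations in
theorem band_commute {G : Type*} [Group G] (n : ℕ) (a : ℕ → G)
    (hbraid : ∀ i, 1 ≤ i → i + 1 ≤ n - 1 →
      a i * a (i + 1) * a i = a (i + 1) * a i * a (i + 1))
    (hcomm : ∀ i j, 1 ≤ i → i + 2 ≤ j → j ≤ n - 1 → a i * a j = a j * a i) :
    ∀ t s r q, t ≤ n → s < t → 1 ≤ s → r ≤ n → q < r → 1 ≤ q →
      0 < ((t : ℤ) - r) * ((t : ℤ) - q) * ((s : ℤ) - r) * ((s : ℤ) - q) →
      band a t s * band a r q = band a r q * band a t s := by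
  intro t s r q ht hst hs hr hqr hq hpos
  rcases nested_or_disjoint_of_mul_pos hpos with hnested | hdisjoint | hnested'
  · exact commute_band_band_of_nested_or_disjoint hbraid hcomm ht hst hs hr hqr hq (.inl hnested)
  · exact commute_band_band_of_nested_or_disjoint hbraid hcomm ht hst hs hr hqr hq
      (.inr hdisjoint)
  · exact (commute_band_band_of_nested_or_disjoint hbraid hcomm hr hqr hq ht hst hs
      (.inl hnested')).symm
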